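/- Assume the input graph G is a similarity (respectively, dissimilarity) ground-truth input. Then, for any admissible objective function and regardless of the tie-breaking rule used, every tree output by the agglomerative heuristics average-linkage, single-linkage, and complete-linkage is an optimal solution; equivalently, every such output tree is a generating tree for G. -/

import Mathlib

open scoped BigOperators

attribute [local instance] Classical.propDecidable

noncomputable section

/-! ### Cluster trees -/

/-- A (binary, rooted) hierarchical-clustering tree whose leaves are labelled by
vertices of `V`. -/
inductive ClusterTree (V : Type) : Type where
  | leaf : V → ClusterTree V
  | node : ClusterTree V → ClusterTree V → ClusterTree V

namespace ClusterTree

variable {V : Type}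

/-- The list of leaf labels of the tree (left-to-right). -/
def leavesList : ClusterTree V → List V
  | leaf v => [v]
  | node L R => leavesList L ++ leavesList R

/-- The set of leaf labels of the tree. -/
def leaves [DecidableEq V] (T : ClusterTree V) : Finset V :=
  T.leavesList.toFinset

end ClusterTree

section Defs

variable {V : Type}

/-- `T` is a cluster tree for the whole (finite) vertex set `V`: its leaves are
pairwise distinct and exhaust the vertices. -/
def IsClusterTree [DecidableEq V] [Fintype V] (T : ClusterTree V) : Prop :=
  T.leavesList.Nodup ∧ T.leaves = Finset.univ

/-- `IsSubtreeOf s T` : `s` occurs as a rooted subtree of `T`. -/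
def IsSubtreeOf : ClusterTree V → ClusterTree V → Prop
  | s, ClusterTree.leaf v => s = ClusterTree.leaf v
  | s, ClusterTree.node L R => s = ClusterTree.node L R ∨ IsSubtreeOf s L ∨ IsSubtreeOf s R

/-- The subtree of `T` rooted at the lowest common ancestor of the leaves `x` and `y`. -/
def lcaSubtree [DecidableEq V] : ClusterTree V → V → V → ClusterTree V
  | ClusterTree.leaf v, _, _ => ClusterTree.leaf v
  | ClusterTree.node L R, x, y =>
    if x ∈ L.leaves ∧ y ∈ L.leaves then lcaSubtree L x y
    else if x ∈ R.leaves ∧ y ∈ R.leaves then lcaSubtree R x y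
    else ClusterTree.node L R

/-- `w(A, B) = ∑_{a ∈ A, b ∈ B} w a b`. -/
def cutWeight (w : V → V → ℝ) (A B : Finset V) : ℝ := ∑ a ∈ A, ∑ b ∈ B, w a b

/-- `w(A) = ∑_{a, b ∈ A} w a b` (ordered pairs; each edge counted twice). -/
def innerWeight (w : V → V → ℝ) (A : Finset V) : ℝ := ∑ a ∈ A, ∑ b ∈ A, w a b

/-- `∑_{e ∈ E} w(e)`, for a symmetric weight function with zero diagonal. -/
def totalWeight [Fintype V] (w : V → V → ℝ) : ℝ := (∑ u : V, ∑ v : V, w u v) / 2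

/-- Cost of a cluster tree: each internal node `N` with children `N₁, N₂`
contributes `w(V(N₁), V(N₂)) · g(|V(N₁)|, |V(N₂)|)`. -/
def treeCost [DecidableEq V] (w : V → V → ℝ) (g : ℕ → ℕ → ℝ) : ClusterTree V → ℝ
  | ClusterTree.leaf _ => 0
  | ClusterTree.node L R =>
      cutWeight w L.leaves R.leaves * g L.leaves.card R.leaves.card
        + treeCost w g L + treeCost w g R

/-- Dasgupta's cost (= `treeCost` with `g (a, b) = a + b`). -/
def dasguptaCost [DecidableEq V] (w : V → V → ℝ) : ClusterTree V → ℝ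
  | ClusterTree.leaf _ => 0
  | ClusterTree.node L R =>
      ((L.leaves.card + R.leaves.card : ℕ) : ℝ) * cutWeight w L.leaves R.leaves
        + dasguptaCost w L + dasguptaCost w R

/-! ### Generating trees -/

/-- `T` is a generating tree for the similarity graph `w` : there is a nonnegative
weight function on the internal nodes, non-increasing from leaves towards the root,
realizing every edge weight at the corresponding LCA. -/
def IsGenerating [DecidableEq V] (w : V → V → ℝ) (T : ClusterTree V) : Prop :=
  ∃ W : ClusterTree V → ℝ,
    (∀ s, IsSubtreeOf s T → 0 ≤ W s) ∧
    (∀ L R, IsSubtreeOf (ClusterTree.node L R) T →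
      ∀ s, IsSubtreeOf s L ∨ IsSubtreeOf s R → W (ClusterTree.node L R) ≤ W s) ∧
    (∀ x y, x ∈ T.leaves → y ∈ T.leaves → x ≠ y → w x y = W (lcaSubtree T x y))

/-- Generating tree in the dissimilarity setting (weights non-decreasing from
leaves towards the root). -/
def IsGeneratingDissim [DecidableEq V] (w : V → V → ℝ) (T : ClusterTree V) : Prop :=
  ∃ W : ClusterTree V → ℝ,
    (∀ s, IsSubtreeOf s T → 0 ≤ W s) ∧
    (∀ L R, IsSubtreeOf (ClusterTree.node L R) T →
      ∀ s, IsSubtreeOf s L ∨ IsSubtreeOf s R → W s ≤ W (ClusterTree.node L R)) ∧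
    (∀ x y, x ∈ T.leaves → y ∈ T.leaves → x ≠ y → w x y = W (lcaSubtree T x y))

/-- Strictly generating tree (similarity setting). -/
def IsStrictlyGenerating [DecidableEq V] (w : V → V → ℝ) (T : ClusterTree V) : Prop :=
  ∃ W : ClusterTree V → ℝ,
    (∀ s, IsSubtreeOf s T → 0 ≤ W s) ∧
    (∀ L R, IsSubtreeOf (ClusterTree.node L R) T →
      ∀ s, IsSubtreeOf s L ∨ IsSubtreeOf s R → W (ClusterTree.node L R) < W s) ∧
    (∀ x y, x ∈ T.leaves → y ∈ T.leaves → x ≠ y → w x y = W (lcaSubtree T x y))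

/-- Strictly generating tree (dissimilarity setting). -/
def IsStrictlyGeneratingDissim [DecidableEq V] (w : V → V → ℝ) (T : ClusterTree V) : Prop :=
  ∃ W : ClusterTree V → ℝ,
    (∀ s, IsSubtreeOf s T → 0 ≤ W s) ∧
    (∀ L R, IsSubtreeOf (ClusterTree.node L R) T →
      ∀ s, IsSubtreeOf s L ∨ IsSubtreeOf s R → W s < W (ClusterTree.node L R)) ∧
    (∀ x y, x ∈ T.leaves → y ∈ T.leaves → x ≠ y → w x y = W (lcaSubtree T x y))

/-! ### Ultrametrics and ground-truth inputs -/

/-- `d` is an ultrametric on `V`. -/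
def IsUltrametric (d : V → V → ℝ) : Prop :=
  (∀ x, d x x = 0) ∧ (∀ x y, d x y = 0 → x = y) ∧ (∀ x y, d x y = d y x) ∧
  (∀ x y, 0 ≤ d x y) ∧ (∀ x y z, d x y ≤ max (d x z) (d y z))

/-- `w` is a similarity graph generated from an ultrametric via a
non-increasing nonnegative function `f`. -/
def GeneratedFromUltrametric (w : V → V → ℝ) : Prop :=
  ∃ (d : V → V → ℝ) (f : ℝ → ℝ),
    IsUltrametric d ∧
    (∀ a b : ℝ, 0 ≤ a → a ≤ b → f b ≤ f a) ∧
    (∀ a : ℝ, 0 ≤ a → 0 ≤ f a) ∧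
    (∀ x y : V, x ≠ y → w x y = f (d x y))

/-- `w` is a dissimilarity graph generated from an ultrametric via a
non-decreasing nonnegative function `f`. -/
def GeneratedFromUltrametricDissim (w : V → V → ℝ) : Prop :=
  ∃ (d : V → V → ℝ) (f : ℝ → ℝ),
    IsUltrametric d ∧
    (∀ a b : ℝ, 0 ≤ a → a ≤ b → f a ≤ f b) ∧
    (∀ a : ℝ, 0 ≤ a → 0 ≤ f a) ∧
    (∀ x y : V, x ≠ y → w x y = f (d x y))

/-- `w` is a similarity graph generated from a *minimal* ultrametric:
pairs with equal weights are at equal ultrametric distance. -/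
def GeneratedFromMinimalUltrametric (w : V → V → ℝ) : Prop :=
  ∃ (d : V → V → ℝ) (f : ℝ → ℝ),
    IsUltrametric d ∧
    (∀ a b : ℝ, 0 ≤ a → a ≤ b → f b ≤ f a) ∧
    (∀ a : ℝ, 0 ≤ a → 0 ≤ f a) ∧
    (∀ x y : V, x ≠ y → w x y = f (d x y)) ∧
    (∀ u v u' v' : V, u ≠ v → u' ≠ v' → f (d u v) = f (d u' v') → d u v = d u' v')

/-- Dissimilarity analogue of `GeneratedFromMinimalUltrametric`. -/
def GeneratedFromMinimalUltrametricDissim (w : V → V → ℝ) : Prop :=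
  ∃ (d : V → V → ℝ) (f : ℝ → ℝ),
    IsUltrametric d ∧
    (∀ a b : ℝ, 0 ≤ a → a ≤ b → f a ≤ f b) ∧
    (∀ a : ℝ, 0 ≤ a → 0 ≤ f a) ∧
    (∀ x y : V, x ≠ y → w x y = f (d x y)) ∧
    (∀ u v u' v' : V, u ≠ v → u' ≠ v' → f (d u v) = f (d u' v') → d u v = d u' v')

/-- `w` is a `δ`-adversarially-perturbed (similarity) ground-truth input. -/
def IsDeltaPerturbedGroundTruth (w : V → V → ℝ) (δ : ℝ) : Prop :=
  ∃ (d : V → V → ℝ) (f : ℝ → ℝ),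
    IsUltrametric d ∧
    (∀ a b : ℝ, 0 ≤ a → a ≤ b → f b ≤ f a) ∧
    (∀ a : ℝ, 0 ≤ a → 0 ≤ f a) ∧
    (∀ x y : V, x ≠ y → f (d x y) ≤ w x y ∧ w x y ≤ δ * f (d x y))

end Defs

/-- The unit-weight clique on `V`. -/
def cliqueW (V : Type) [DecidableEq V] : V → V → ℝ := fun x y => if x = y then 0 else 1

/-- Admissibility of a cost function (similarity setting): on every similarity graph
generated from a minimal ultrametric, a cluster tree minimizes the cost
iff it is a generating tree. -/
def Admissible (g : ℕ → ℕ → ℝ) : Prop :=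
  ∀ (V : Type) [Fintype V] [DecidableEq V] (w : V → V → ℝ),
    GeneratedFromMinimalUltrametric w →
    ∀ T : ClusterTree V, IsClusterTree T →
      ((∀ T' : ClusterTree V, IsClusterTree T' → treeCost w g T ≤ treeCost w g T')
        ↔ IsGenerating w T)

/-- Admissibility of a value function (dissimilarity setting): on every dissimilarity
graph generated from a minimal ultrametric, a cluster tree maximizes the value
iff it is a generating tree. -/
def AdmissibleDissim (g : ℕ → ℕ → ℝ) : Prop :=
  ∀ (V : Type) [Fintype V] [DecidableEq V] (w : V → V → ℝ),
    GeneratedFromMinimalUltrametricDissim w →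
    ∀ T : ClusterTree V, IsClusterTree T →
      ((∀ T' : ClusterTree V, IsClusterTree T' → treeCost w g T' ≤ treeCost w g T)
        ↔ IsGeneratingDissim w T)

/-! ### Agglomerative (linkage) algorithms, modelled as a nondeterministic relation -/

/-- The initial state of an agglomerative algorithm: all singleton trees. -/
def initState (V : Type) [Fintype V] : Multiset (ClusterTree V) :=
  Finset.univ.val.map ClusterTree.leaf

/-- One merge step of a generic linkage algorithm: merge two candidate trees whose
leaf-set distance `D` is best (w.r.t. `better a b` = "`a` is at least as good as `b`")
among all candidate pairs; any tie-breaking choice is allowed. -/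
inductive MergeStep {V : Type} [DecidableEq V] (D : Finset V → Finset V → ℝ)
    (better : ℝ → ℝ → Prop) :
    Multiset (ClusterTree V) → Multiset (ClusterTree V) → Prop where
  | step : ∀ (rest : Multiset (ClusterTree V)) (T1 T2 : ClusterTree V),
      (∀ (T1' T2' : ClusterTree V) (rest' : Multiset (ClusterTree V)),
          T1 ::ₘ T2 ::ₘ rest = T1' ::ₘ T2' ::ₘ rest' →
          better (D T1.leaves T2.leaves) (D T1'.leaves T2'.leaves)) →
      MergeStep D better (T1 ::ₘ T2 ::ₘ rest) (ClusterTree.node T1 T2 ::ₘ rest)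

/-- `T` is a possible output of the linkage algorithm with dissimilarity/similarity
measure `D` and preference `better`. -/
def IsLinkageOutput {V : Type} [Fintype V] [DecidableEq V]
    (D : Finset V → Finset V → ℝ) (better : ℝ → ℝ → Prop) (T : ClusterTree V) : Prop :=
  Relation.ReflTransGen (MergeStep D better) (initState V) {T}

/-- Average-linkage measure. -/
def avgDist {V : Type} (w : V → V → ℝ) (A B : Finset V) : ℝ :=
  cutWeight w A B / ((A.card : ℝ) * (B.card : ℝ))

/-- Single-linkage measure: `min_{x ∈ A, y ∈ B} w x y`. -/
def minLinkDist {V : Type} [DecidableEq V] (w : V → V → ℝ) (A B : Finset V) : ℝ :=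
  WithTop.untopD 0 (((A ×ˢ B).image fun p => w p.1 p.2).min)

/-- Complete-linkage measure: `max_{x ∈ A, y ∈ B} w x y`. -/
def maxLinkDist {V : Type} [DecidableEq V] (w : V → V → ℝ) (A B : Finset V) : ℝ :=
  WithBot.unbotD 0 (((A ×ˢ B).image fun p => w p.1 p.2).max)

/-! ### Cuts -/

section Cuts

variable {V : Type}

/-- `A ⊕ x` : add `x` to `A` if absent, remove it if present. -/
def symmDiffV [DecidableEq V] (A : Finset V) (x : V) : Finset V :=
  if x ∈ A then A.erase x else insert x A

/-- `(A, B)` is an `ε/|A ∪ B|`-locally-densest cut of the induced subgraph on `A ∪ B`. -/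
def IsLocallyDensestCut [DecidableEq V] (w : V → V → ℝ) (ε : ℝ) (A B : Finset V) : Prop :=
  ∀ x ∈ A ∪ B,
    cutWeight w (symmDiffV A x) (symmDiffV B x) /
        (((symmDiffV A x).card : ℝ) * ((symmDiffV B x).card : ℝ)) ≤
      (1 + ε / ((A ∪ B).card : ℝ)) *
        (cutWeight w A B / ((A.card : ℝ) * (B.card : ℝ)))

/-- Cluster trees obtained by recursively splitting along `ε/n`-locally-densest cuts. -/
def IsRecLocallyDensestCutTree [DecidableEq V] (w : V → V → ℝ) (ε : ℝ) :
    ClusterTree V → Prop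
  | ClusterTree.leaf _ => True
  | ClusterTree.node L R =>
      IsLocallyDensestCut w ε L.leaves R.leaves ∧
      IsRecLocallyDensestCutTree w ε L ∧ IsRecLocallyDensestCutTree w ε R

/-- Cluster trees obtained by recursively splitting along `φ`-approximate sparsest cuts. -/
def IsRecApproxSparsestCutTree [DecidableEq V] (w : V → V → ℝ) (φ : ℝ) :
    ClusterTree V → Prop
  | ClusterTree.leaf _ => True
  | ClusterTree.node L R =>
      (∀ S : Finset V, S ⊆ L.leaves ∪ R.leaves → S.Nonempty → S ⊂ L.leaves ∪ R.leaves →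
        cutWeight w L.leaves R.leaves / ((L.leaves.card : ℝ) * (R.leaves.card : ℝ)) ≤
          φ * (cutWeight w S ((L.leaves ∪ R.leaves) \ S) /
            ((S.card : ℝ) * (((L.leaves ∪ R.leaves) \ S).card : ℝ)))) ∧
      IsRecApproxSparsestCutTree w φ L ∧ IsRecApproxSparsestCutTree w φ R

/-- Cluster trees obtained by recursively splitting along exact sparsest cuts. -/
def IsRecSparsestCutTree [DecidableEq V] (w : V → V → ℝ) : ClusterTree V → Prop
  | ClusterTree.leaf _ => True
  | ClusterTree.node L R =>
      (∀ S : Finset V, S ⊆ L.leaves ∪ R.leaves → S.Nonempty → S ⊂ L.leaves ∪ R.leaves →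
        cutWeight w L.leaves R.leaves / ((L.leaves.card : ℝ) * (R.leaves.card : ℝ)) ≤
          cutWeight w S ((L.leaves ∪ R.leaves) \ S) /
            ((S.card : ℝ) * (((L.leaves ∪ R.leaves) \ S).card : ℝ))) ∧
      IsRecSparsestCutTree w L ∧ IsRecSparsestCutTree w R

/-- Cluster trees obtained by recursively splitting along exact densest cuts. -/
def IsRecDensestCutTree [DecidableEq V] (w : V → V → ℝ) : ClusterTree V → Prop
  | ClusterTree.leaf _ => True
  | ClusterTree.node L R =>
      (∀ S : Finset V, S ⊆ L.leaves ∪ R.leaves → S.Nonempty → S ⊂ L.leaves ∪ R.leaves →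
        cutWeight w S ((L.leaves ∪ R.leaves) \ S) /
            ((S.card : ℝ) * (((L.leaves ∪ R.leaves) \ S).card : ℝ)) ≤
          cutWeight w L.leaves R.leaves / ((L.leaves.card : ℝ) * (R.leaves.card : ℝ))) ∧
      IsRecDensestCutTree w L ∧ IsRecDensestCutTree w R

/-- Cluster trees produced by the bisection 2-Center algorithm (similarity setting). -/
def IsBisection2CenterTree [DecidableEq V] (w : V → V → ℝ) : ClusterTree V → Prop
  | ClusterTree.leaf _ => True
  | ClusterTree.node L R =>
      (∃ u ∈ L.leaves ∪ R.leaves, ∃ v ∈ L.leaves ∪ R.leaves, u ≠ v ∧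
        (∃ r : ℝ,
          (∀ x ∈ L.leaves ∪ R.leaves, r ≤ max (w x u) (w x v)) ∧
          (∀ u' ∈ L.leaves ∪ R.leaves, ∀ v' ∈ L.leaves ∪ R.leaves, u' ≠ v' →
            ∃ x ∈ L.leaves ∪ R.leaves, max (w x u') (w x v') ≤ r)) ∧
        L.leaves = (L.leaves ∪ R.leaves).filter fun x => w x v ≤ w x u) ∧
      IsBisection2CenterTree w L ∧ IsBisection2CenterTree w R

/-- Cluster trees produced by the bisection 2-Center algorithm (dissimilarity setting). -/
def IsBisection2CenterTreeDissim [DecidableEq V] (w : V → V → ℝ) : ClusterTree V → Prop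
  | ClusterTree.leaf _ => True
  | ClusterTree.node L R =>
      (∃ u ∈ L.leaves ∪ R.leaves, ∃ v ∈ L.leaves ∪ R.leaves, u ≠ v ∧
        (∃ r : ℝ,
          (∀ x ∈ L.leaves ∪ R.leaves, min (w x u) (w x v) ≤ r) ∧
          (∀ u' ∈ L.leaves ∪ R.leaves, ∀ v' ∈ L.leaves ∪ R.leaves, u' ≠ v' →
            ∃ x ∈ L.leaves ∪ R.leaves, r ≤ min (w x u') (w x v'))) ∧
        L.leaves = (L.leaves ∪ R.leaves).filter fun x => w x u ≤ w x v) ∧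
      IsBisection2CenterTreeDissim w L ∧ IsBisection2CenterTreeDissim w R

end Cuts

/-! ### Pivot algorithms -/

mutual
/-- Trees produced by the fast pivot algorithm (Algorithm 6 of CKMM):
pick a pivot `p`, split the other vertices into classes of equal similarity to `p`
(in strictly decreasing order of similarity), recurse, and attach along a spine. -/
inductive IsPivotTree {V : Type} [DecidableEq V] (w : V → V → ℝ) : ClusterTree V → Prop where
  | mk : ∀ (p : V) (T : ClusterTree V), PivotSpine w p T → IsPivotTree w T

/-- The spine of the pivot algorithm: `PivotSpine w p T` says that `T` is an iterated
union of the single-vertex tree on `p` with pivot trees of the similarity classes of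
`p`, attached in strictly decreasing order of similarity to `p`. -/
inductive PivotSpine {V : Type} [DecidableEq V] (w : V → V → ℝ) : V → ClusterTree V → Prop where
  | base : ∀ p : V, PivotSpine w p (ClusterTree.leaf p)
  | step : ∀ (p : V) (S T : ClusterTree V) (c : ℝ),
      PivotSpine w p S → IsPivotTree w T →
      (∀ v ∈ T.leaves, w p v = c) →
      (∀ u ∈ S.leaves, u ≠ p → c < w p u) →
      PivotSpine w p (ClusterTree.node S T)
end

mutual
/-- Trees produced by the robust pivot algorithm (Algorithm 7 of CKMM). -/
inductive IsRobustPivotTree {V : Type} [DecidableEq V] (w : V → V → ℝ) :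
    ClusterTree V → Prop where
  | mk : ∀ (p : V) (T : ClusterTree V), RobustPivotSpine w T.leaves p T →
      IsRobustPivotTree w T

/-- `RobustPivotSpine w U p T` : `T` is a prefix (a spine) of a run of the robust pivot
algorithm on the vertex set `U`, started at the pivot `p`.  At each step, `wi` is the
maximum weight of an edge in the cut `(Ṽ, U \ Ṽ)` (where `Ṽ` is the set of already
clustered vertices), and the next block is the least subset of `U \ Ṽ` closed under
adding any vertex having an edge of weight at least `wi` into the block or into `Ṽ`. -/
inductive RobustPivotSpine {V : Type} [DecidableEq V] (w : V → V → ℝ) :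
    Finset V → V → ClusterTree V → Prop where
  | base : ∀ (U : Finset V) (p : V), RobustPivotSpine w U p (ClusterTree.leaf p)
  | step : ∀ (U : Finset V) (p : V) (S T : ClusterTree V) (wi : ℝ),
      RobustPivotSpine w U p S →
      IsRobustPivotTree w T →
      (∃ p1 ∈ S.leaves, ∃ p2 ∈ U \ S.leaves, w p1 p2 = wi) →
      (∀ q1 ∈ S.leaves, ∀ q2 ∈ U \ S.leaves, w q1 q2 ≤ wi) →
      T.leaves ⊆ U \ S.leaves →
      (∀ u ∈ U \ S.leaves, (∃ v ∈ T.leaves ∪ S.leaves, wi ≤ w u v) → u ∈ T.leaves) →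
      (∀ C : Finset V, C ⊆ U \ S.leaves →
        (∀ u ∈ U \ S.leaves, (∃ v ∈ C ∪ S.leaves, wi ≤ w u v) → u ∈ C) →
        T.leaves ⊆ C) →
      RobustPivotSpine w U p (ClusterTree.node S T)
end

/-! ### Paths and caterpillars -/

/-- Attach the leaves from the list `l` one by one on top of `t` (a "spine"). -/
def spineTree {V : Type} : ClusterTree V → List V → ClusterTree V
  | t, [] => t
  | t, v :: vs => spineTree (ClusterTree.node t (ClusterTree.leaf v)) vs

/-- The unit-weight path on `n` vertices. -/
def pathW (n : ℕ) (i j : Fin n) : ℝ :=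
  if (i : ℕ) + 1 = (j : ℕ) ∨ (j : ℕ) + 1 = (i : ℕ) then 1 else 0

/-! ### Random graphs: hierarchical stochastic block model -/

/-- Index set for the potential edges of a graph on `Fin n`. -/
abbrev EdgeIdx (n : ℕ) := {p : Fin n × Fin n // p.1 < p.2}

/-- The (0/1) weight function of the random graph described by the edge
configuration `c`. -/
def configW {n : ℕ} (c : EdgeIdx n → Bool) (u v : Fin n) : ℝ :=
  if h : u < v then (if c ⟨(u, v), h⟩ then 1 else 0)
  else if h' : v < u then (if c ⟨(v, u), h'⟩ then 1 else 0)
  else 0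

/-- The probability of the edge configuration `c` when each edge `e` is present
independently with probability `q e`. -/
def configProb {n : ℕ} (q : Fin n → Fin n → ℝ) (c : EdgeIdx n → Bool) : ℝ :=
  ∏ e : EdgeIdx n, if c e then q e.val.1 e.val.2 else 1 - q e.val.1 e.val.2

/-- The expected cost `E[Γ(T) | ψ]` of a fixed cluster tree `T`, over the random
choice of the edges (with edge probabilities `q`). -/
def expectedCost {n : ℕ} (g : ℕ → ℕ → ℝ) (q : Fin n → Fin n → ℝ)
    (T : ClusterTree (Fin n)) : ℝ :=
  ∑ c : EdgeIdx n → Bool, configProb q c * treeCost (configW c) g T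

/-- The (fixed, size-independent) data of a hierarchical stochastic block model with
`k` bottom-level clusters: a generating tree `Ttil` with weights `Wtil` in `(0,1)`
(the graph `G̃ₖ` on `k` vertices generated from an ultrametric), and intra-cluster
probabilities `p i ∈ (0,1]` exceeding the weight of the parent of leaf `i`. -/
structure HSBM (k : ℕ) where
  Ttil : ClusterTree (Fin k)
  Wtil : ClusterTree (Fin k) → ℝ
  p : Fin k → ℝ
  ttil_isClusterTree : IsClusterTree Ttil
  wtil_pos : ∀ L R, IsSubtreeOf (ClusterTree.node L R) Ttil →
    0 < Wtil (ClusterTree.node L R)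
  wtil_lt_one : ∀ L R, IsSubtreeOf (ClusterTree.node L R) Ttil →
    Wtil (ClusterTree.node L R) < 1
  wtil_mono : ∀ L R, IsSubtreeOf (ClusterTree.node L R) Ttil →
    ∀ s, IsSubtreeOf s L ∨ IsSubtreeOf s R → Wtil (ClusterTree.node L R) ≤ Wtil s
  p_pos : ∀ i, 0 < p i
  p_le_one : ∀ i, p i ≤ 1
  p_gt_parent : ∀ L R, IsSubtreeOf (ClusterTree.node L R) Ttil →
    ∀ i : Fin k, L = ClusterTree.leaf i ∨ R = ClusterTree.leaf i →
      Wtil (ClusterTree.node L R) < p i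

/-- The edge probabilities of the HSBM `M` with sparsity `α`, given the assignment
`ψ` of vertices to bottom-level clusters.  These are also the edge weights of the
expected graph `Ḡ`. -/
def HSBM.edgeProb {k : ℕ} (M : HSBM k) (α : ℝ) {n : ℕ} (ψ : Fin n → Fin k) :
    Fin n → Fin n → ℝ := fun u v =>
  if ψ u = ψ v then α * M.p (ψ u)
  else α * M.Wtil (lcaSubtree M.Ttil (ψ u) (ψ v))

/-- The probability of the sample `ω = (ψ, c)` (labels and edges) of the HSBM `M`
with label proportions `f` and sparsity `α`. -/
def hsbmProb {k : ℕ} (M : HSBM k) (f : Fin k → ℝ) (α : ℝ) {n : ℕ}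
    (ω : (Fin n → Fin k) × (EdgeIdx n → Bool)) : ℝ :=
  (∏ v : Fin n, f (ω.1 v)) * configProb (M.edgeProb α ω.1) ω.2

/-- The common cost `κ(n)` of all cluster trees of the unit-weight clique on `n`
vertices (computed on the caterpillar tree). -/
def cliqueTreeCost (g : ℕ → ℕ → ℝ) (n : ℕ) : ℝ :=
  ∑ i ∈ Finset.range n, (i : ℝ) * g i 1

/-- The smoothness property: `max {g(n₁,n₂) : n₁+n₂ = n} = O(κ(n)/n²)`. -/
def SmoothCost (g : ℕ → ℕ → ℝ) : Prop :=
  ∃ C : ℝ, 0 < C ∧ ∀ n1 n2 : ℕ, 1 ≤ n1 → 1 ≤ n2 →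
    g n1 n2 * (((n1 + n2 : ℕ) : ℝ)) ^ 2 ≤ C * cliqueTreeCost g (n1 + n2)

end

/-!
Similarity and dissimilarity are treated together by a relation `r` on weights (`≤`, resp. `≥`):
linkage merges an `r`-largest pair of clusters. Along any run, the current trees partition `V`
into modules of `w` (no outside vertex distinguishes two vertices of a cluster), each with a
generating weight whose root value `r`-dominates every edge leaving the cluster. All edges
between two modules share one weight, which is exactly what average-, single- and complete-
linkage return; so the merged pair is joined by the `r`-largest inter-cluster weight `c`, and
putting `c` at the new root keeps the weights monotone. The union is again a module because in
a ground-truth input every triangle is isosceles with its two `r`-smaller sides equal.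
Optimality for admissible objectives follows since a ground-truth input is also generated by a
minimal ultrametric (reparametrise the ultrametric by the weights themselves).
-/

namespace ClusterTree

variable {V : Type}

theorem leavesList_ne_nil : ∀ t : ClusterTree V, t.leavesList ≠ []
  | leaf _ => List.cons_ne_nil _ _
  | node L _ => by simp [leavesList, leavesList_ne_nil L]

variable [DecidableEq V]

theorem mem_leaves {t : ClusterTree V} {x : V} : x ∈ t.leaves ↔ x ∈ t.leavesList :=
  List.mem_toFinset

theorem leaves_nonempty (t : ClusterTree V) : t.leaves.Nonempty :=
  List.toFinset_nonempty_iff _ |>.2 t.leavesList_ne_nil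

@[simp]
theorem leaves_leaf (v : V) : (leaf v).leaves = {v} := rfl

@[simp]
theorem leaves_node (L R : ClusterTree V) : (node L R).leaves = L.leaves ∪ R.leaves := by
  simp [leaves, leavesList, List.toFinset_append]

end ClusterTree

open ClusterTree

section Subtrees

variable {V : Type}

theorem isSubtreeOf_refl : ∀ t : ClusterTree V, IsSubtreeOf t t
  | leaf _ => rfl
  | node _ _ => Or.inl rfl

theorem IsSubtreeOf.trans {a b : ClusterTree V} :
    ∀ {c : ClusterTree V}, IsSubtreeOf a b → IsSubtreeOf b c → IsSubtreeOf a c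
  | leaf v, hab, hbc => (show b = leaf v from hbc) ▸ hab
  | node _ _, hab, Or.inl h => h ▸ hab
  | node _ _, hab, Or.inr (Or.inl h) => Or.inr (Or.inl (hab.trans h))
  | node _ _, hab, Or.inr (Or.inr h) => Or.inr (Or.inr (hab.trans h))

variable [DecidableEq V]

theorem IsSubtreeOf.leaves_subset {s : ClusterTree V} :
    ∀ {t : ClusterTree V}, IsSubtreeOf s t → s.leaves ⊆ t.leaves
  | leaf v, h => by rw [show s = leaf v from h]
  | node _ _, Or.inl h => by rw [h]
  | node _ _, Or.inr (Or.inl h) => h.leaves_subset.trans <| by simp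
  | node _ _, Or.inr (Or.inr h) => h.leaves_subset.trans <| by simp

theorem IsSubtreeOf.not_of_disjoint {s t u : ClusterTree V} (hst : IsSubtreeOf s t)
    (htu : Disjoint t.leaves u.leaves) : ¬ IsSubtreeOf s u := fun hsu => by
  obtain ⟨v, hv⟩ := s.leaves_nonempty
  exact Finset.disjoint_left.1 htu (hst.leaves_subset hv) (hsu.leaves_subset hv)

theorem isSubtreeOf_lcaSubtree : ∀ (t : ClusterTree V) (x y : V), IsSubtreeOf (lcaSubtree t x y) t
  | leaf _, _, _ => rfl
  | node L R, x, y => by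
    unfold lcaSubtree
    split_ifs
    · exact Or.inr (Or.inl (isSubtreeOf_lcaSubtree L x y))
    · exact Or.inr (Or.inr (isSubtreeOf_lcaSubtree R x y))
    · exact Or.inl rfl

end Subtrees

section GroundTruth

variable {V : Type}

/-- The common shape of `GeneratedFromUltrametric` (`r = (· ≤ ·)`) and
`GeneratedFromUltrametricDissim` (`r = (· ≥ ·)`); both are definitionally instances. -/
def IsGroundTruth (r : ℝ → ℝ → Prop) (w : V → V → ℝ) : Prop :=
  ∃ (d : V → V → ℝ) (f : ℝ → ℝ),
    IsUltrametric d ∧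
    (∀ a b : ℝ, 0 ≤ a → a ≤ b → r (f b) (f a)) ∧
    (∀ a : ℝ, 0 ≤ a → 0 ≤ f a) ∧
    (∀ x y : V, x ≠ y → w x y = f (d x y))

namespace IsGroundTruth

variable {r : ℝ → ℝ → Prop} {w : V → V → ℝ} {x y z : V}

theorem symm (hw : IsGroundTruth r w) (h : x ≠ y) : w x y = w y x := by
  obtain ⟨d, f, ⟨-, -, hd_symm, -, -⟩, -, -, hwf⟩ := hw
  rw [hwf x y h, hwf y x h.symm, hd_symm]

theorem nonneg (hw : IsGroundTruth r w) (h : x ≠ y) : 0 ≤ w x y := by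
  obtain ⟨d, f, ⟨-, -, -, hd_nonneg, -⟩, -, hf_nonneg, hwf⟩ := hw
  rw [hwf x y h]
  exact hf_nonneg _ (hd_nonneg x y)

theorem rel_or_rel (hw : IsGroundTruth r w) (hxy : x ≠ y) (hxz : x ≠ z) (hyz : y ≠ z) :
    r (w x z) (w x y) ∨ r (w y z) (w x y) := by
  obtain ⟨d, f, ⟨-, -, -, hd_nonneg, hd_ultra⟩, hf, -, hwf⟩ := hw
  rw [hwf x y hxy, hwf x z hxz, hwf y z hyz]
  rcases le_total (d x z) (d y z) with h | h
  · exact Or.inr <| hf _ _ (hd_nonneg x y) ((hd_ultra x y z).trans (max_eq_right h).le)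
  · exact Or.inl <| hf _ _ (hd_nonneg x y) ((hd_ultra x y z).trans (max_eq_left h).le)

theorem eq_of_rel_of_rel [IsTrans ℝ r] [Std.Antisymm r] (hw : IsGroundTruth r w)
    (hxy : x ≠ y) (hxz : x ≠ z) (hyz : y ≠ z)
    (hx : r (w x z) (w x y)) (hy : r (w y z) (w x y)) : w x z = w y z := by
  have key : ∀ {a b : V}, a ≠ b → a ≠ z → b ≠ z → r (w b z) (w a b) → r (w b z) (w a z) := by
    intro a b hab haz hbz hb
    rcases hw.rel_or_rel haz hab hbz.symm with h | h
    · exact _root_.trans hb h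
    · rwa [hw.symm hbz.symm] at h
  exact antisymm (key hxy.symm hyz hxz (hw.symm hxy ▸ hx)) (key hxy hxz hyz hy)

end IsGroundTruth

theorem IsUltrametric.ite_one_add [DecidableEq V] {d : V → V → ℝ} (hd : IsUltrametric d)
    {φ : ℝ → ℝ} (hφ : MonotoneOn φ (Set.Ici 0)) (hφ_nonneg : ∀ t, 0 ≤ t → 0 ≤ φ t) :
    IsUltrametric fun x y => if x = y then 0 else 1 + φ (d x y) := by
  obtain ⟨-, -, hd_symm, hd_nonneg, hd_ultra⟩ := hd
  have hpos : ∀ x y, 0 < 1 + φ (d x y) := fun x y => by linarith [hφ_nonneg _ (hd_nonneg x y)]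
  refine ⟨fun x => if_pos rfl, fun x y h => ?_, fun x y => ?_, fun x y => ?_, fun x y z => ?_⟩
  · by_contra hxy
    simp only [hxy, if_false] at h
    linarith [hpos x y]
  · by_cases hxy : x = y
    · simp [hxy]
    · simp [hxy, Ne.symm hxy, hd_symm]
  · dsimp only
    split_ifs
    exacts [le_rfl, (hpos x y).le]
  · by_cases hxy : x = y
    · simp only [hxy, if_true]
      exact le_max_of_le_left (by split_ifs <;> linarith [hpos y z])
    by_cases hxz : x = z
    · subst hxz
      simp [hxy, Ne.symm hxy, hd_symm]
    by_cases hyz : y = z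
    · subst hyz
      simp [hxy]
    simp only [hxy, hxz, hyz, if_false]
    have hmono := hφ.map_max (Set.mem_Ici.2 (hd_nonneg x z)) (Set.mem_Ici.2 (hd_nonneg y z))
    have := hφ (Set.mem_Ici.2 (hd_nonneg x y))
      (Set.mem_Ici.2 (le_max_of_le_left (hd_nonneg x z))) (hd_ultra x y z)
    rw [hmono] at this
    rw [max_add_add_left]
    linarith

theorem GeneratedFromUltrametric.toMinimal [DecidableEq V] {w : V → V → ℝ}
    (hw : GeneratedFromUltrametric w) : GeneratedFromMinimalUltrametric w := by
  obtain ⟨d, f, hd, hf, hf_nonneg, hwf⟩ := hw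
  have hval : ∀ x y : V, x ≠ y →
      max (f 0 + 1 - (if x = y then 0 else 1 + (f 0 - f (d x y)))) 0 = f (d x y) := by
    intro x y h
    simp only [h, if_false, show f 0 + 1 - (1 + (f 0 - f (d x y))) = f (d x y) by ring]
    exact max_eq_left (hf_nonneg _ (hd.2.2.2.1 x y))
  refine ⟨_, fun t => max (f 0 + 1 - t) 0,
    hd.ite_one_add (φ := fun t => f 0 - f t) (fun a ha b _ hab => by linarith [hf a b ha hab])
      (fun t ht => by linarith [hf 0 t le_rfl ht]),
    fun a b _ hab => max_le_max (by linarith) le_rfl, fun _ _ => le_max_right _ _,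
    fun x y h => (hwf x y h).trans (hval x y h).symm, fun u v u' v' h h' he => ?_⟩
  beta_reduce at he
  rw [hval u v h, hval u' v' h'] at he
  simp only [h, h', if_false, he]

theorem GeneratedFromUltrametricDissim.toMinimal [DecidableEq V] {w : V → V → ℝ}
    (hw : GeneratedFromUltrametricDissim w) : GeneratedFromMinimalUltrametricDissim w := by
  obtain ⟨d, f, hd, hf, hf_nonneg, hwf⟩ := hw
  have hval : ∀ x y : V, x ≠ y →
      max (f 0 + ((if x = y then 0 else 1 + (f (d x y) - f 0)) - 1)) 0 = f (d x y) := by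
    intro x y h
    simp only [h, if_false, show f 0 + (1 + (f (d x y) - f 0) - 1) = f (d x y) by ring]
    exact max_eq_left (hf_nonneg _ (hd.2.2.2.1 x y))
  refine ⟨_, fun t => max (f 0 + (t - 1)) 0,
    hd.ite_one_add (φ := fun t => f t - f 0) (fun a ha b _ hab => by linarith [hf a b ha hab])
      (fun t ht => by linarith [hf 0 t le_rfl ht]),
    fun a b _ hab => max_le_max (by linarith) le_rfl, fun _ _ => le_max_right _ _,
    fun x y h => (hwf x y h).trans (hval x y h).symm, fun u v u' v' h h' he => ?_⟩
  beta_reduce at he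
  rw [hval u v h, hval u' v' h'] at he
  simp only [h, h', if_false, he]

end GroundTruth

section GeneratingWeight

variable {V : Type} [DecidableEq V] {r : ℝ → ℝ → Prop} {w : V → V → ℝ}

/-- `IsGenerating w t` is `∃ W, IsGeneratingWeight (· ≤ ·) w t W` and `IsGeneratingDissim w t`
is `∃ W, IsGeneratingWeight (· ≥ ·) w t W`, definitionally. -/
def IsGeneratingWeight (r : ℝ → ℝ → Prop) (w : V → V → ℝ) (t : ClusterTree V)
    (W : ClusterTree V → ℝ) : Prop :=
  (∀ s, IsSubtreeOf s t → 0 ≤ W s) ∧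
  (∀ L R, IsSubtreeOf (node L R) t →
    ∀ s, IsSubtreeOf s L ∨ IsSubtreeOf s R → r (W (node L R)) (W s)) ∧
  (∀ x y, x ∈ t.leaves → y ∈ t.leaves → x ≠ y → w x y = W (lcaSubtree t x y))

theorem IsGeneratingWeight.rel_root [Std.Refl r] {t s : ClusterTree V} {W : ClusterTree V → ℝ}
    (hW : IsGeneratingWeight r w t W) (hs : IsSubtreeOf s t) : r (W t) (W s) := by
  cases t with
  | leaf v => rw [show s = leaf v from hs]; exact refl _
  | node L R =>
    rcases hs with rfl | hs
    · exact refl _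
    · exact hW.2.1 L R (isSubtreeOf_refl _) s hs

theorem IsGeneratingWeight.exists_node [IsTrans ℝ r] [Std.Refl r] {T₁ T₂ : ClusterTree V}
    {W₁ W₂ : ClusterTree V → ℝ} {c : ℝ}
    (h₁ : IsGeneratingWeight r w T₁ W₁) (h₂ : IsGeneratingWeight r w T₂ W₂)
    (hdisj : Disjoint T₁.leaves T₂.leaves) (hc : 0 ≤ c) (hc₁ : r c (W₁ T₁)) (hc₂ : r c (W₂ T₂))
    (hcross : ∀ x ∈ T₁.leaves, ∀ y ∈ T₂.leaves, w x y = c ∧ w y x = c) :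
    ∃ W, IsGeneratingWeight r w (node T₁ T₂) W ∧ W (node T₁ T₂) = c := by
  set W : ClusterTree V → ℝ := fun s =>
    if IsSubtreeOf s T₁ then W₁ s else if IsSubtreeOf s T₂ then W₂ s else c
  have hW₁ : ∀ s, IsSubtreeOf s T₁ → W s = W₁ s := fun s hs => if_pos hs
  have hW₂ : ∀ s, IsSubtreeOf s T₂ → W s = W₂ s := fun s hs =>
    (if_neg (hs.not_of_disjoint hdisj.symm)).trans (if_pos hs)
  have hroot : W (node T₁ T₂) = c := by
    have hT₁ : IsSubtreeOf T₁ (node T₁ T₂) := Or.inr (Or.inl (isSubtreeOf_refl _))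
    have hT₂ : IsSubtreeOf T₂ (node T₁ T₂) := Or.inr (Or.inr (isSubtreeOf_refl _))
    exact (if_neg fun h => (isSubtreeOf_refl T₂).not_of_disjoint hdisj.symm (hT₂.trans h)).trans
      (if_neg fun h => (isSubtreeOf_refl T₁).not_of_disjoint hdisj (hT₁.trans h))
  refine ⟨W, ⟨?_, ?_, ?_⟩, hroot⟩
  · rintro s (rfl | hs | hs)
    · exact hroot ▸ hc
    · exact hW₁ s hs ▸ h₁.1 s hs
    · exact hW₂ s hs ▸ h₂.1 s hs
  · rintro L R (heq | hLR | hLR) s hs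
    · obtain ⟨rfl, rfl⟩ : L = T₁ ∧ R = T₂ := node.inj heq
      rw [hroot]
      rcases hs with hs | hs
      · exact hW₁ s hs ▸ _root_.trans hc₁ (h₁.rel_root hs)
      · exact hW₂ s hs ▸ _root_.trans hc₂ (h₂.rel_root hs)
    · rw [hW₁ _ hLR, hW₁ s (IsSubtreeOf.trans (b := node L R) (Or.inr hs) hLR)]
      exact h₁.2.1 L R hLR s hs
    · rw [hW₂ _ hLR, hW₂ s (IsSubtreeOf.trans (b := node L R) (Or.inr hs) hLR)]
      exact h₂.2.1 L R hLR s hs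
  · intro x y hx hy hxy
    rw [leaves_node, Finset.mem_union] at hx hy
    unfold lcaSubtree
    split_ifs with h11 h22
    · rw [hW₁ _ (isSubtreeOf_lcaSubtree _ _ _)]
      exact h₁.2.2 x y h11.1 h11.2 hxy
    · rw [hW₂ _ (isSubtreeOf_lcaSubtree _ _ _)]
      exact h₂.2.2 x y h22.1 h22.2 hxy
    · rw [hroot]
      rcases hx with hx | hx <;> rcases hy with hy | hy
      exacts [absurd ⟨hx, hy⟩ h11, (hcross x hx y hy).1, (hcross y hy x hx).2,
        absurd ⟨hx, hy⟩ h22]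

end GeneratingWeight

section LinkageMeasures

variable {V : Type}

def IsFaithfulLinkage (w : V → V → ℝ) (D : Finset V → Finset V → ℝ) : Prop :=
  ∀ A B : Finset V, A.Nonempty → B.Nonempty → ∀ c, (∀ x ∈ A, ∀ y ∈ B, w x y = c) → D A B = c

variable (w : V → V → ℝ)

theorem isFaithfulLinkage_avgDist : IsFaithfulLinkage w (avgDist w) := by
  intro A B hA hB c hc
  have hcut : cutWeight w A B = (A.card : ℝ) * ((B.card : ℝ) * c) := by
    rw [cutWeight, Finset.sum_congr rfl fun a ha => Finset.sum_congr rfl fun b hb => hc a ha b hb]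
    simp [Finset.sum_const, nsmul_eq_mul]
  have hA0 : (A.card : ℝ) ≠ 0 := Nat.cast_ne_zero.2 hA.card_pos.ne'
  have hB0 : (B.card : ℝ) ≠ 0 := Nat.cast_ne_zero.2 hB.card_pos.ne'
  rw [avgDist, hcut]
  field_simp

theorem image_product_eq_singleton {A B : Finset V} (hA : A.Nonempty) (hB : B.Nonempty) {c : ℝ}
    (hc : ∀ x ∈ A, ∀ y ∈ B, w x y = c) : (A ×ˢ B).image (fun p => w p.1 p.2) = {c} := by
  rw [Finset.image_congr (g := fun _ => c), Finset.image_const (hA.product hB)]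
  rintro ⟨x, y⟩ hxy
  rw [Finset.mem_coe, Finset.mem_product] at hxy
  exact hc x hxy.1 y hxy.2

theorem isFaithfulLinkage_minLinkDist [DecidableEq V] : IsFaithfulLinkage w (minLinkDist w) := by
  intro A B hA hB c hc
  simp [minLinkDist, image_product_eq_singleton w hA hB hc]

theorem isFaithfulLinkage_maxLinkDist [DecidableEq V] : IsFaithfulLinkage w (maxLinkDist w) := by
  intro A B hA hB c hc
  simp [maxLinkDist, image_product_eq_singleton w hA hB hc]

end LinkageMeasures

section Linkage

variable {V : Type} {r : ℝ → ℝ → Prop} {w : V → V → ℝ}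

/-- A module in the sense of modular decomposition. -/
def IsModule (w : V → V → ℝ) (A : Finset V) : Prop :=
  ∀ x ∈ A, ∀ y ∈ A, ∀ z ∉ A, w x z = w y z

theorem IsModule.cross_eq {A B : Finset V} (hA : IsModule w A) (hB : IsModule w B)
    (hsymm : ∀ x y, x ≠ y → w x y = w y x) (hAB : Disjoint A B)
    {x x' y y' : V} (hx : x ∈ A) (hx' : x' ∈ A) (hy : y ∈ B) (hy' : y' ∈ B) :
    w x y = w x' y' := by
  have hne : ∀ {a b}, a ∈ A → b ∈ B → a ≠ b := fun ha hb h =>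
    Finset.disjoint_left.1 hAB ha (h ▸ hb)
  calc w x y = w x' y := hA x hx x' hx' y (Finset.disjoint_right.1 hAB hy)
    _ = w y x' := hsymm _ _ (hne hx' hy)
    _ = w y' x' := hB y hy y' hy' x' (Finset.disjoint_left.1 hAB hx')
    _ = w x' y' := hsymm _ _ (hne hx' hy').symm

def stateLeaves (S : Multiset (ClusterTree V)) : Multiset V :=
  S.bind fun t => (t.leavesList : Multiset V)

theorem stateLeaves_node_cons (T₁ T₂ : ClusterTree V) (S : Multiset (ClusterTree V)) :
    stateLeaves (node T₁ T₂ ::ₘ S) = stateLeaves (T₁ ::ₘ T₂ ::ₘ S) := by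
  simp only [stateLeaves, Multiset.cons_bind, leavesList, ← Multiset.coe_add, add_assoc]

variable [DecidableEq V]

theorem IsModule.union {A B : Finset V} (hA : IsModule w A) (hB : IsModule w B)
    (hAB : ∀ x ∈ A, ∀ y ∈ B, ∀ z ∉ A ∪ B, w x z = w y z) : IsModule w (A ∪ B) := by
  intro x hx y hy z hz
  rw [Finset.mem_union] at hx hy
  have hzA : z ∉ A := fun h => hz (Finset.mem_union_left _ h)
  have hzB : z ∉ B := fun h => hz (Finset.mem_union_right _ h)
  rcases hx with hx | hx <;> rcases hy with hy | hy
  exacts [hA x hx y hy z hzA, hAB x hx y hy z hz, (hAB y hy x hx z hz).symm, hB x hx y hy z hzB]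

def IsLinkageCluster (r : ℝ → ℝ → Prop) (w : V → V → ℝ) (t : ClusterTree V) : Prop :=
  IsModule w t.leaves ∧
    ∃ W, IsGeneratingWeight r w t W ∧ ∀ x ∈ t.leaves, ∀ z ∉ t.leaves, r (w x z) (W t)

theorem disjoint_leaves_of_nodup {t₁ t₂ : ClusterTree V} {S : Multiset (ClusterTree V)}
    (h : (stateLeaves (t₁ ::ₘ t₂ ::ₘ S)).Nodup) : Disjoint t₁.leaves t₂.leaves := by
  simp only [stateLeaves, Multiset.cons_bind, Multiset.nodup_add] at h
  exact Finset.disjoint_left.2 fun _ hx₁ hx₂ => Multiset.disjoint_left.1 h.2.2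
    (Multiset.mem_coe.2 (mem_leaves.1 hx₁))
    (Multiset.mem_add.2 (Or.inl (Multiset.mem_coe.2 (mem_leaves.1 hx₂))))

variable [Fintype V]

def IsLinkageState (r : ℝ → ℝ → Prop) (w : V → V → ℝ) (S : Multiset (ClusterTree V)) : Prop :=
  stateLeaves S = Finset.univ.val ∧ ∀ t ∈ S, IsLinkageCluster r w t

namespace IsLinkageState

variable {S : Multiset (ClusterTree V)}

theorem nodup (hS : IsLinkageState r w S) : (stateLeaves S).Nodup :=
  hS.1 ▸ Finset.univ.nodup

theorem exists_mem_leaves (hS : IsLinkageState r w S) (z : V) : ∃ t ∈ S, z ∈ t.leaves := by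
  have hz : z ∈ stateLeaves S := hS.1 ▸ Finset.mem_univ_val z
  obtain ⟨t, ht, hzt⟩ := Multiset.mem_bind.1 hz
  exact ⟨t, ht, mem_leaves.2 (Multiset.mem_coe.1 hzt)⟩

theorem linkage_eq {D : Finset V → Finset V → ℝ} (hS : IsLinkageState r w S)
    (hsymm : ∀ x y, x ≠ y → w x y = w y x) (hD : IsFaithfulLinkage w D)
    {A B : ClusterTree V} {S' : Multiset (ClusterTree V)} (hAB : S = A ::ₘ B ::ₘ S')
    {x y : V} (hx : x ∈ A.leaves) (hy : y ∈ B.leaves) : D A.leaves B.leaves = w x y := by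
  subst hAB
  have hA := (hS.2 A (Multiset.mem_cons_self _ _)).1
  have hB := (hS.2 B (Multiset.mem_cons_of_mem (Multiset.mem_cons_self _ _))).1
  exact hD _ _ ⟨x, hx⟩ ⟨y, hy⟩ _ fun x' hx' y' hy' =>
    hA.cross_eq hB hsymm (disjoint_leaves_of_nodup hS.nodup) hx' hx hy' hy

theorem rel_of_mergeBest {D : Finset V → Finset V → ℝ} {T₁ T₂ : ClusterTree V}
    {rest : Multiset (ClusterTree V)} (hS : IsLinkageState r w (T₁ ::ₘ T₂ ::ₘ rest))
    (hsymm : ∀ x y, x ≠ y → w x y = w y x) (hD : IsFaithfulLinkage w D)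
    (hbest : ∀ T₁' T₂' rest', T₁ ::ₘ T₂ ::ₘ rest = T₁' ::ₘ T₂' ::ₘ rest' →
      flip r (D T₁.leaves T₂.leaves) (D T₁'.leaves T₂'.leaves))
    {x z : V} (hx : x ∈ (node T₁ T₂).leaves) (hz : z ∉ (node T₁ T₂).leaves) :
    r (w x z) (D T₁.leaves T₂.leaves) := by
  rw [leaves_node, Finset.mem_union] at hx hz
  simp only [not_or] at hz
  obtain ⟨t, ht, hzt⟩ := hS.exists_mem_leaves z
  obtain ⟨rest', rfl⟩ : ∃ rest', rest = t ::ₘ rest' := by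
    rcases Multiset.mem_cons.1 ht with rfl | ht
    · exact absurd hzt hz.1
    rcases Multiset.mem_cons.1 ht with rfl | ht
    · exact absurd hzt hz.2
    exact Multiset.exists_cons_of_mem ht
  rcases hx with hx | hx
  · have hperm : T₁ ::ₘ T₂ ::ₘ t ::ₘ rest' = T₁ ::ₘ t ::ₘ T₂ ::ₘ rest' := by
      rw [Multiset.cons_swap T₂ t]
    exact hS.linkage_eq hsymm hD hperm hx hzt ▸ hbest _ _ _ hperm
  · have hperm : T₁ ::ₘ T₂ ::ₘ t ::ₘ rest' = T₂ ::ₘ t ::ₘ T₁ ::ₘ rest' := by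
      rw [Multiset.cons_swap T₁ T₂, Multiset.cons_swap T₁ t]
    exact hS.linkage_eq hsymm hD hperm hx hzt ▸ hbest _ _ _ hperm

end IsLinkageState

end Linkage

section LinkageRun

variable {V : Type} [Fintype V] [DecidableEq V] {r : ℝ → ℝ → Prop} {w : V → V → ℝ}

theorem exists_nonneg_rel_bound [IsTrans ℝ r] [Std.Total r] (hnn : ∀ x y : V, x ≠ y → 0 ≤ w x y) :
    ∃ M, 0 ≤ M ∧ ∀ x y : V, x ≠ y → r (w x y) M := by
  -- `none ↦ 0` makes the index type nonempty and the bound nonnegative.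
  let f : Option {p : V × V // p.1 ≠ p.2} → ℝ := fun o => o.elim 0 fun p => w p.1.1 p.1.2
  obtain ⟨m, hm⟩ := (Std.Total.directed f : Directed r f).finset_le Finset.univ
  refine ⟨f m, ?_, fun x y hxy => hm (some ⟨(x, y), hxy⟩) (Finset.mem_univ _)⟩
  cases m with
  | none => exact le_rfl
  | some p => exact hnn _ _ p.2

theorem isLinkageState_initState [IsTrans ℝ r] [Std.Total r]
    (hnn : ∀ x y : V, x ≠ y → 0 ≤ w x y) : IsLinkageState r w (initState V) := by
  obtain ⟨M, hM, hMw⟩ := exists_nonneg_rel_bound (r := r) hnn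
  refine ⟨by simpa [stateLeaves, initState, leavesList, Multiset.bind_map] using
    Multiset.bind_singleton Finset.univ.val id, ?_⟩
  simp only [initState, Multiset.mem_map]
  rintro _ ⟨v, -, rfl⟩
  simp only [IsLinkageCluster, IsModule, leaves_leaf, Finset.mem_singleton]
  refine ⟨?_, fun _ => M, ⟨fun _ _ => hM, fun L R h => ?_, ?_⟩, ?_⟩
  · rintro x rfl y rfl z -
    rfl
  · cases h
  · intro x y hx hy hxy
    rw [leaves_leaf, Finset.mem_singleton] at hx hy
    exact absurd (hx.trans hy.symm) hxy
  · rintro x rfl z hz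
    exact hMw x z (Ne.symm hz)

theorem IsLinkageState.mergeStep [IsLinearOrder ℝ r] (hw : IsGroundTruth r w)
    {D : Finset V → Finset V → ℝ} (hD : IsFaithfulLinkage w D) {S S' : Multiset (ClusterTree V)}
    (hS : IsLinkageState r w S) (hstep : MergeStep D (flip r) S S') : IsLinkageState r w S' := by
  obtain ⟨rest, T₁, T₂, hbest⟩ := hstep
  obtain ⟨hmod₁, W₁, hW₁, hdom₁⟩ := hS.2 T₁ (Multiset.mem_cons_self _ _)
  obtain ⟨hmod₂, W₂, hW₂, hdom₂⟩ :=
    hS.2 T₂ (Multiset.mem_cons_of_mem (Multiset.mem_cons_self _ _))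
  have hdisj := disjoint_leaves_of_nodup hS.nodup
  have hne : ∀ {x y}, x ∈ T₁.leaves → y ∈ T₂.leaves → x ≠ y := fun hx hy h =>
    Finset.disjoint_left.1 hdisj hx (h ▸ hy)
  set c := D T₁.leaves T₂.leaves
  have hc : ∀ x ∈ T₁.leaves, ∀ y ∈ T₂.leaves, w x y = c ∧ w y x = c := fun x hx y hy =>
    have hxy := (hS.linkage_eq (fun _ _ => hw.symm) hD rfl hx hy).symm
    ⟨hxy, (hw.symm (hne hx hy).symm).trans hxy⟩
  have hout : ∀ x ∈ (node T₁ T₂).leaves, ∀ z ∉ (node T₁ T₂).leaves, r (w x z) c :=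
    fun x hx z hz => hS.rel_of_mergeBest (fun _ _ => hw.symm) hD hbest hx hz
  obtain ⟨x₀, hx₀⟩ := T₁.leaves_nonempty
  obtain ⟨y₀, hy₀⟩ := T₂.leaves_nonempty
  obtain ⟨W, hW, hWc⟩ := hW₁.exists_node hW₂ hdisj ((hc x₀ hx₀ y₀ hy₀).1 ▸ hw.nonneg (hne hx₀ hy₀))
    ((hc x₀ hx₀ y₀ hy₀).1 ▸ hdom₁ x₀ hx₀ y₀ (Finset.disjoint_right.1 hdisj hy₀))
    ((hc x₀ hx₀ y₀ hy₀).2 ▸ hdom₂ y₀ hy₀ x₀ (Finset.disjoint_left.1 hdisj hx₀)) hc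
  have hmod : IsModule w (node T₁ T₂).leaves := by
    rw [leaves_node]
    refine hmod₁.union hmod₂ fun x hx y hy z hz => ?_
    have hx' : x ∈ (node T₁ T₂).leaves := by simp [hx]
    have hy' : y ∈ (node T₁ T₂).leaves := by simp [hy]
    rw [← leaves_node] at hz
    exact hw.eq_of_rel_of_rel (hne hx hy) (ne_of_mem_of_not_mem hx' hz)
      (ne_of_mem_of_not_mem hy' hz) ((hc x hx y hy).1 ▸ hout x hx' z hz)
      ((hc x hx y hy).1 ▸ hout y hy' z hz)
  refine ⟨(stateLeaves_node_cons T₁ T₂ rest).trans hS.1, fun t ht => ?_⟩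
  rcases Multiset.mem_cons.1 ht with rfl | ht
  · exact ⟨hmod, W, hW, fun x hx z hz => hWc ▸ hout x hx z hz⟩
  · exact hS.2 t (Multiset.mem_cons_of_mem (Multiset.mem_cons_of_mem ht))

theorem IsLinkageState.isClusterTree_and_generating_of_singleton {T : ClusterTree V}
    (h : IsLinkageState r w {T}) :
    IsClusterTree T ∧ ∃ W, IsGeneratingWeight r w T W := by
  have hT : (T.leavesList : Multiset V) = Finset.univ.val := by
    simpa [stateLeaves] using h.1
  refine ⟨⟨Multiset.coe_nodup.1 (hT ▸ Finset.univ.nodup), ?_⟩, ?_⟩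
  · ext v
    simp [mem_leaves, ← Multiset.mem_coe, hT]
  · obtain ⟨-, W, hW, -⟩ := h.2 T (Multiset.mem_singleton_self T)
    exact ⟨W, hW⟩

theorem IsLinkageOutput.isClusterTree_and_generating [IsLinearOrder ℝ r]
    (hw : IsGroundTruth r w) {D : Finset V → Finset V → ℝ} (hD : IsFaithfulLinkage w D)
    {T : ClusterTree V} (hT : IsLinkageOutput D (flip r) T) :
    IsClusterTree T ∧ ∃ W, IsGeneratingWeight r w T W := by
  have hreach : ∀ {S}, Relation.ReflTransGen (MergeStep D (flip r)) (initState V) S →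
      IsLinkageState r w S := by
    intro S h
    induction h with
    | refl => exact isLinkageState_initState fun x y => hw.nonneg
    | tail _ hstep ih => exact ih.mergeStep hw hD hstep
  exact (hreach hT).isClusterTree_and_generating_of_singleton

end LinkageRun

/-- Theorem 8, CKMM: on ground-truth inputs, average-, single- and
complete-linkage return generating trees — hence optimal solutions for every
admissible objective function — regardless of tie-breaking, in both the similarity
and the dissimilarity settings. -/
theorem statement10 {V : Type} [Fintype V] [DecidableEq V] (w : V → V → ℝ) :
    (GeneratedFromUltrametric w →
      ∀ T : ClusterTree V,
        (IsLinkageOutput (avgDist w) (fun a b => b ≤ a) T ∨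
          IsLinkageOutput (minLinkDist w) (fun a b => b ≤ a) T ∨
          IsLinkageOutput (maxLinkDist w) (fun a b => b ≤ a) T) →
        IsClusterTree T ∧ IsGenerating w T ∧
          ∀ g : ℕ → ℕ → ℝ, Admissible g →
            ∀ T' : ClusterTree V, IsClusterTree T' →
              treeCost w g T ≤ treeCost w g T') ∧
    (GeneratedFromUltrametricDissim w →
      ∀ T : ClusterTree V,
        (IsLinkageOutput (avgDist w) (fun a b => a ≤ b) T ∨
          IsLinkageOutput (minLinkDist w) (fun a b => a ≤ b) T ∨
          IsLinkageOutput (maxLinkDist w) (fun a b => a ≤ b) T) →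
        IsClusterTree T ∧ IsGeneratingDissim w T ∧
          ∀ g : ℕ → ℕ → ℝ, AdmissibleDissim g →
            ∀ T' : ClusterTree V, IsClusterTree T' →
              treeCost w g T' ≤ treeCost w g T) := by
  have linkage : ∀ (r : ℝ → ℝ → Prop) [IsLinearOrder ℝ r], IsGroundTruth r w →
      ∀ T : ClusterTree V,
        (IsLinkageOutput (avgDist w) (flip r) T ∨ IsLinkageOutput (minLinkDist w) (flip r) T ∨
          IsLinkageOutput (maxLinkDist w) (flip r) T) →
        IsClusterTree T ∧ ∃ W, IsGeneratingWeight r w T W := by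
    rintro r _ hw T (hT | hT | hT)
    exacts [hT.isClusterTree_and_generating hw (isFaithfulLinkage_avgDist w),
      hT.isClusterTree_and_generating hw (isFaithfulLinkage_minLinkDist w),
      hT.isClusterTree_and_generating hw (isFaithfulLinkage_maxLinkDist w)]
  refine ⟨fun hw T hT => ?_, fun hw T hT => ?_⟩
  · obtain ⟨hT, hgen⟩ := linkage (· ≤ ·) hw T hT
    exact ⟨hT, hgen, fun g hg => (hg V w hw.toMinimal T hT).2 hgen⟩
  · obtain ⟨hT, hgen⟩ := linkage (· ≥ ·) hw T hT
    exact ⟨hT, hgen, fun g hg => (hg V w hw.toMinimal T hT).2 hgen⟩
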